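/- Let K ⊂ ℝ² be an origin-symmetric convex body, let R > 0, and write h_K = R + ω on the unit circle S¹. Let e ∈ S¹ and ϑ ∈ (0, π/2), and assume h_K(e) ≤ R cos ϑ. For t ∈ ℝ let e′(t) denote the unit vector obtained by rotating e clockwise by angle t (so e′(t) = (cos t) e − (sin t) e⊥ where e⊥ is e rotated counterclockwise by π/2). Then |ω(e)| ≤ (35/ϑ) ∫_{ϑ/5}^{ϑ} |ω(e′(t))| dt. -/

import Mathlib

/-! Since `e + e′(2t) = (2 cos t) e′(t)`, subadditivity and positive homogeneity of `h_K` give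
`2 cos t · h_K(e′(t)) ≤ h_K(e) + h_K(e′(2t))`, that is
`R - h_K(e) ≤ R t² + |ω(e′(2t))| + 2 |ω(e′(t))|`. Integrating over `t ∈ [ϑ/5, ϑ/2]` bounds
`ϑ (R - h_K(e))` by the integral of `|ω ∘ e′|` over `[ϑ/5, ϑ]` up to an error `O(R ϑ³)`, and
`h_K(e) ≤ R cos ϑ ≤ R (1 - 2ϑ²/π²)` makes `R ϑ²` at most `π²/2 · (R - h_K(e))`, so the error is
absorbed. -/

open MeasureTheory Metric Set Real
open scoped ENNReal RealInnerProductSpace Pointwise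

noncomputable section

abbrev Eucl (n : ℕ) := EuclideanSpace ℝ (Fin n)

/-- The support function of a set `K`. -/
def suppFn {n : ℕ} (K : Set (Eucl n)) (θ : Eucl n) : ℝ :=
  sSup ((fun x => ⟪x, θ⟫) '' K)

/-- The radial function of a set `K`. -/
def radFn {n : ℕ} (K : Set (Eucl n)) (θ : Eucl n) : ℝ :=
  sSup {t : ℝ | 0 < t ∧ t • θ ∈ K}

/-- An origin-symmetric convex body. -/
def IsSymmConvexBody {n : ℕ} (K : Set (Eucl n)) : Prop :=
  Convex ℝ K ∧ IsCompact K ∧ (interior K).Nonempty ∧ K = -K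

/-- `vol_{n-1}(K ∩ θ^⊥)`, the `(n-1)`-dimensional Hausdorff measure of the
central hyperplane section of `K` orthogonal to `θ`. -/
def secVol (n : ℕ) (K : Set (Eucl n)) (θ : Eucl n) : ℝ :=
  (μH[(n : ℝ) - 1] (K ∩ {x : Eucl n | ⟪x, θ⟫ = 0})).toReal


/-- `e` rotated counterclockwise by `π/2`. -/
def eperp (e : Eucl 2) : Eucl 2 :=
  (EuclideanSpace.equiv (Fin 2) ℝ).symm ![-(e 1), e 0]

/-- The unit vector obtained from `e` by rotating clockwise by the angle `t`. -/
def eRot (e : Eucl 2) (t : ℝ) : Eucl 2 :=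
  Real.cos t • e - Real.sin t • eperp e

section SupportFunction

variable {n : ℕ} {K : Set (Eucl n)}

lemma suppFn_smul (u : Eucl n) {c : ℝ} (hc : 0 ≤ c) : suppFn K (c • u) = c * suppFn K u := by
  rw [suppFn, suppFn, ← smul_eq_mul, ← Real.sSup_smul_of_nonneg hc, ← image_smul, image_image]
  simp_rw [real_inner_smul_right, smul_eq_mul]

lemma suppFn_add_le (hK : Bornology.IsBounded K) (u v : Eucl n) :
    suppFn K (u + v) ≤ suppFn K u + suppFn K v := by
  rcases K.eq_empty_or_nonempty with rfl | hne
  · simp [suppFn]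
  have hbdd (w : Eucl n) : BddAbove ((fun x => ⟪x, w⟫) '' K) := by
    obtain ⟨M, hM⟩ := hK.exists_norm_le
    refine ⟨M * ‖w‖, ?_⟩
    rintro _ ⟨x, hx, rfl⟩
    exact (real_inner_le_norm x w).trans (by gcongr; exact hM x hx)
  refine csSup_le (hne.image _) ?_
  rintro _ ⟨x, hx, rfl⟩
  show ⟪x, u + v⟫ ≤ _
  rw [inner_add_right]
  exact add_le_add (le_csSup (hbdd u) ⟨x, hx, rfl⟩) (le_csSup (hbdd v) ⟨x, hx, rfl⟩)

lemma continuous_suppFn (hK : IsCompact K) : Continuous (suppFn K) :=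
  hK.continuous_sSup (f := fun θ x => ⟪x, θ⟫) (by fun_prop)

end SupportFunction

lemma continuous_eRot (e : Eucl 2) : Continuous (eRot e) := by
  unfold eRot; fun_prop

lemma add_eRot_two_mul (e : Eucl 2) (t : ℝ) :
    e + eRot e (2 * t) = (2 * Real.cos t) • eRot e t := by
  unfold eRot
  rw [Real.cos_two_mul, Real.sin_two_mul]
  module

lemma two_mul_cos_mul_suppFn_eRot_le {K : Set (Eucl 2)} (hK : Bornology.IsBounded K)
    (e : Eucl 2) {t : ℝ} (ht : 0 ≤ Real.cos t) :
    2 * Real.cos t * suppFn K (eRot e t) ≤ suppFn K e + suppFn K (eRot e (2 * t)) := by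
  rw [← suppFn_smul _ (by positivity), ← add_eRot_two_mul]
  exact suppFn_add_le hK _ _

lemma sub_suppFn_le_of_cos_nonneg {K : Set (Eucl 2)} (hK : Bornology.IsBounded K) (e : Eucl 2)
    {R t : ℝ} (hR : 0 ≤ R) (ht : 0 ≤ Real.cos t) :
    R - suppFn K e ≤
      R * t ^ 2 + |suppFn K (eRot e (2 * t)) - R| + 2 * |suppFn K (eRot e t) - R| := by
  have hkey := two_mul_cos_mul_suppFn_eRot_le hK e ht
  have hcos := Real.one_sub_sq_div_two_le_cos (x := t)
  have h1 : -(Real.cos t * (suppFn K (eRot e t) - R)) ≤ |suppFn K (eRot e t) - R| :=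
    calc -(Real.cos t * (suppFn K (eRot e t) - R))
        ≤ Real.cos t * |suppFn K (eRot e t) - R| := by
          rw [← mul_neg]; exact mul_le_mul_of_nonneg_left (neg_le_abs _) ht
      _ ≤ |suppFn K (eRot e t) - R| :=
          mul_le_of_le_one_left (abs_nonneg _) (Real.cos_le_one t)
  have h2 := le_abs_self (suppFn K (eRot e (2 * t)) - R)
  nlinarith

-- `3 / 10 = 1 / 2 - 1 / 5` and `39 / 1000 = ((1 / 2) ^ 3 - (1 / 5) ^ 3) / 3`.
lemma three_mul_sub_le_integral_of_forall_le {g : ℝ → ℝ} (hg : Continuous g)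
    (hg0 : ∀ t, 0 ≤ g t) {δ R ϑ : ℝ} (hϑ : 0 < ϑ)
    (h : ∀ t ∈ Icc (ϑ / 5) (ϑ / 2), δ ≤ R * t ^ 2 + g (2 * t) + 2 * g t) :
    3 * δ * ϑ / 10 - 39 * R * ϑ ^ 3 / 1000 ≤ 5 / 2 * ∫ t in (ϑ / 5)..ϑ, g t := by
  have hab : ϑ / 5 ≤ ϑ / 2 := by linarith
  have hsub {a b : ℝ} (ha : ϑ / 5 ≤ a) (hle : a ≤ b) (hb : b ≤ ϑ) :
      ∫ t in a..b, g t ≤ ∫ t in (ϑ / 5)..ϑ, g t :=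
    intervalIntegral.integral_mono_interval ha hle hb (.of_forall hg0) (hg.intervalIntegrable _ _)
  have hc {f : ℝ → ℝ} (hf : Continuous f) : IntervalIntegrable f volume (ϑ / 5) (ϑ / 2) :=
    hf.intervalIntegrable _ _
  have hint := intervalIntegral.integral_mono_on hab intervalIntegrable_const (hc (by fun_prop)) h
  rw [intervalIntegral.integral_const,
    intervalIntegral.integral_add (hc (by fun_prop)) (hc (by fun_prop)),
    intervalIntegral.integral_add (hc (by fun_prop)) (hc (by fun_prop)),
    intervalIntegral.integral_const_mul, intervalIntegral.integral_const_mul, integral_pow,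
    intervalIntegral.integral_comp_mul_left g two_ne_zero] at hint
  have h1 := hsub (a := 2 * (ϑ / 5)) (b := 2 * (ϑ / 2)) (by linarith) (by linarith) (by linarith)
  have h2 := hsub (a := ϑ / 5) (b := ϑ / 2) le_rfl hab (by linarith)
  simp only [smul_eq_mul] at hint
  linarith

theorem stmt_6_general (K : Set (Eucl 2)) (hK : IsSymmConvexBody K) (R : ℝ) (hR : 0 < R)
    (e : Eucl 2) (ϑ : ℝ) (hϑ : ϑ ∈ Ioo 0 (π / 2))
    (hsupp : suppFn K e ≤ R * Real.cos ϑ) :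
    |suppFn K e - R| ≤ (35 / ϑ) * ∫ t in (ϑ / 5)..ϑ, |suppFn K (eRot e t) - R| := by
  obtain ⟨hϑ0, hϑ1⟩ := hϑ
  have hKb := hK.2.1.isBounded
  have hg : Continuous fun t => |suppFn K (eRot e t) - R| := by
    have := continuous_suppFn hK.2.1 |>.comp (continuous_eRot e)
    fun_prop
  have hI := three_mul_sub_le_integral_of_forall_le hg (fun _ => abs_nonneg _) hϑ0 fun t ht =>
    sub_suppFn_le_of_cos_nonneg hKb e hR.le
      (Real.cos_nonneg_of_mem_Icc ⟨by linarith [ht.1], by linarith [ht.2]⟩)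
  have hcos := Real.cos_le_one_sub_mul_cos_sq (x := ϑ) (by rw [abs_of_pos hϑ0]; linarith)
  have hI0 : 0 ≤ ∫ t in (ϑ / 5)..ϑ, |suppFn K (eRot e t) - R| :=
    intervalIntegral.integral_nonneg (by linarith) fun _ _ => abs_nonneg _
  have hδ : 2 * R * ϑ ^ 2 / π ^ 2 ≤ R - suppFn K e :=
    calc 2 * R * ϑ ^ 2 / π ^ 2 = R - R * (1 - 2 / π ^ 2 * ϑ ^ 2) := by ring
      _ ≤ R - R * Real.cos ϑ := by gcongr
      _ ≤ R - suppFn K e := by linarith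
  have hδ0 : 0 ≤ R - suppFn K e := le_trans (by positivity) hδ
  rw [div_le_iff₀ (by positivity)] at hδ
  have hπ : π ^ 2 < 10 := by nlinarith [Real.pi_lt_d2, Real.pi_pos]
  have hcubic : 2 * R * ϑ ^ 3 ≤ 10 * (R - suppFn K e) * ϑ := by
    nlinarith [mul_le_mul_of_nonneg_left hδ hϑ0.le, mul_nonneg hδ0 hϑ0.le]
  rw [abs_of_nonpos (by linarith), neg_sub, div_mul_eq_mul_div, le_div_iff₀ hϑ0]
  linarith

/-- the planar maximal-function lemma (Lemma 5.1). -/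
theorem stmt_6 (K : Set (Eucl 2)) (hK : IsSymmConvexBody K) (R : ℝ) (hR : 0 < R)
    (e : Eucl 2) (he : e ∈ sphere (0 : Eucl 2) 1) (ϑ : ℝ) (hϑ : ϑ ∈ Ioo 0 (π / 2))
    (hsupp : suppFn K e ≤ R * Real.cos ϑ) :
    |suppFn K e - R| ≤ (35 / ϑ) * ∫ t in (ϑ / 5)..ϑ, |suppFn K (eRot e t) - R| :=
  stmt_6_general K hK R hR e ϑ hϑ hsupp

end
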